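/- There exists a constant C > 0 such that for every ε ∈ (0, 1/4] and every u ∈ L²(ℝ) with finite weak H^{1/2} seminorm, the Slobodetski H^{1/2−ε} seminorm satisfies |u|²_{H^{1/2−ε}} ≤ (C/ε) (‖u‖²_{L²} + |u|²_{H^{1/2}_w}). In particular the canonical injection of H^{1/2}_w(ℝ) into H^{1/2−ε}(ℝ) has norm of order ε^{−1/2} for small ε. -/

import Mathlib

/-!
Substituting `y = x - h` and swapping the integrals writes `|u|²_{H^s}` as the integral
of `‖u - u(· - h)‖²_{L²} / |h|^{1+2s}` over `h`. For `|h| ≤ 1` the weak `H^{1/2}` bound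
`M² |h|` leaves the kernel `|h|^{-2s}`, whose integral `2 / (1 - 2s) = 1/ε` is the source of
the blow-up; for `|h| > 1` the trivial bound `4 ‖u‖²_{L²}` against the integrable kernel
`|h|^{-1-2s}` suffices.
-/

open MeasureTheory Set

/-- Squared Slobodetski `H^s` seminorm on `ℝ`, for `s ∈ (0,1)`. -/
noncomputable def slobSq (s : ℝ) (u : ℝ → ℝ) : ENNReal :=
  ∫⁻ x : ℝ, ∫⁻ y : ℝ, ENNReal.ofReal ((u x - u y) ^ 2 / |x - y| ^ (1 + 2 * s))

/-- `‖u - u(· - h)‖²_{L²}`. -/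
noncomputable def shiftDiffSq (u : ℝ → ℝ) (h : ℝ) : ENNReal :=
  ∫⁻ x, ENNReal.ofReal ((u x - u (x - h)) ^ 2)

theorem lintegral_comp_abs (f : ℝ → ENNReal) :
    ∫⁻ x, f |x| = 2 * ∫⁻ x in Ioi 0, f x := by
  have h_pos : ∫⁻ x in Ioi 0, f |x| = ∫⁻ x in Ioi 0, f x :=
    setLIntegral_congr_fun measurableSet_Ioi fun x hx => by rw [abs_of_pos hx]
  have h_neg : ∫⁻ x in Iic 0, f |x| = ∫⁻ x in Ioi 0, f |x| := by
    have := (Measure.measurePreserving_neg (volume : Measure ℝ)).setLIntegral_comp_preimage_emb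
      (Homeomorph.neg ℝ).measurableEmbedding (fun x => f |x|) (Iic 0)
    simp only [abs_neg, neg_preimage, neg_Iic, neg_zero] at this
    rw [← this, setLIntegral_congr Ioi_ae_eq_Ici]
  rw [← lintegral_add_compl _ measurableSet_Ioi, compl_Ioi, h_neg, h_pos, two_mul]

theorem setLIntegral_comp_abs (f : ℝ → ENNReal) {t : Set ℝ} (ht : MeasurableSet t) :
    ∫⁻ x in (|·|) ⁻¹' t, f |x| = 2 * ∫⁻ x in t ∩ Ioi 0, f x :=
  calc ∫⁻ x in (|·|) ⁻¹' t, f |x| = ∫⁻ x, t.indicator f |x| := by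
        rw [← lintegral_indicator (measurable_abs ht)]; rfl
    _ = 2 * ∫⁻ x in t ∩ Ioi 0, f x := by rw [lintegral_comp_abs, setLIntegral_indicator ht]

theorem setLIntegral_rpow_abs_le_one {r : ℝ} (hr : -1 < r) :
    ∫⁻ x in {x : ℝ | |x| ≤ 1}, ENNReal.ofReal (|x| ^ r) = ENNReal.ofReal (2 / (r + 1)) := by
  have h_int : IntegrableOn (fun x : ℝ => x ^ r) (Ioc 0 1) :=
    (intervalIntegrable_iff_integrableOn_Ioc_of_le zero_le_one).1
      (intervalIntegral.intervalIntegrable_rpow' hr)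
  have h_nonneg : 0 ≤ᵐ[volume.restrict (Ioc 0 1)] fun x : ℝ => x ^ r :=
    ae_restrict_of_forall_mem measurableSet_Ioc fun x hx => Real.rpow_nonneg hx.1.le r
  have h_val : ∫ x in Ioc 0 1, x ^ r = 1 / (r + 1) := by
    rw [← intervalIntegral.integral_of_le zero_le_one, integral_rpow (Or.inl hr),
      Real.one_rpow, Real.zero_rpow (by linarith), sub_zero]
  refine (setLIntegral_comp_abs (fun x => ENNReal.ofReal (x ^ r))
    (measurableSet_Iic (a := 1))).trans ?_
  rw [Iic_inter_Ioi, ← ofReal_integral_eq_lintegral_ofReal h_int h_nonneg, h_val,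
    ← ENNReal.ofReal_ofNat 2, ← ENNReal.ofReal_mul zero_le_two, mul_one_div]

theorem setLIntegral_rpow_abs_one_lt {r : ℝ} (hr : r < -1) :
    ∫⁻ x in {x : ℝ | 1 < |x|}, ENNReal.ofReal (|x| ^ r) = ENNReal.ofReal (-2 / (r + 1)) := by
  have h_nonneg : 0 ≤ᵐ[volume.restrict (Ioi 1)] fun x : ℝ => x ^ r :=
    ae_restrict_of_forall_mem measurableSet_Ioi fun x hx =>
      Real.rpow_nonneg (zero_le_one.trans hx.le) r
  refine (setLIntegral_comp_abs (fun x => ENNReal.ofReal (x ^ r))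
    (measurableSet_Ioi (a := 1))).trans ?_
  rw [inter_eq_left.2 (Ioi_subset_Ioi zero_le_one),
    ← ofReal_integral_eq_lintegral_ofReal (integrableOn_Ioi_rpow_of_lt hr zero_lt_one) h_nonneg,
    integral_Ioi_rpow_of_lt hr zero_lt_one, Real.one_rpow, ← ENNReal.ofReal_ofNat 2,
    ← ENNReal.ofReal_mul zero_le_two, mul_div_assoc', mul_neg_one]

section

variable {u : ℝ → ℝ}

theorem slobSq_eq_lintegral_shiftDiffSq (hu : AEMeasurable u) (s : ℝ) :
    slobSq s u = ∫⁻ h, shiftDiffSq u h * ENNReal.ofReal (|h| ^ (-(1 + 2 * s))) := by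
  have h_div (a b : ℝ) : ENNReal.ofReal (a ^ 2 / |b| ^ (1 + 2 * s))
      = ENNReal.ofReal (a ^ 2) * ENNReal.ofReal (|b| ^ (-(1 + 2 * s))) := by
    rw [Real.rpow_neg (abs_nonneg b), div_eq_mul_inv, ENNReal.ofReal_mul (sq_nonneg a)]
  have h_meas : AEMeasurable (Function.uncurry fun x h : ℝ =>
      ENNReal.ofReal ((u x - u (x - h)) ^ 2) * ENNReal.ofReal (|h| ^ (-(1 + 2 * s))))
      (volume.prod volume) := by
    have h_fst : AEMeasurable (fun q : ℝ × ℝ => u q.1) (volume.prod volume) :=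
      hu.comp_quasiMeasurePreserving Measure.quasiMeasurePreserving_fst
    have h_sub : AEMeasurable (fun q : ℝ × ℝ => u (q.1 - q.2)) (volume.prod volume) :=
      hu.comp_quasiMeasurePreserving (quasiMeasurePreserving_sub volume volume)
    exact ((h_fst.sub h_sub).pow_const 2).ennreal_ofReal.mul
      (measurable_snd.abs.pow_const _).ennreal_ofReal.aemeasurable
  calc slobSq s u
      = ∫⁻ x, ∫⁻ h, ENNReal.ofReal ((u x - u (x - h)) ^ 2)
          * ENNReal.ofReal (|h| ^ (-(1 + 2 * s))) := by
        refine lintegral_congr fun x => ?_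
        simp_rw [h_div]
        rw [← lintegral_sub_left_eq_self _ x]
        simp only [sub_sub_cancel]
    _ = ∫⁻ h, ∫⁻ x, ENNReal.ofReal ((u x - u (x - h)) ^ 2)
          * ENNReal.ofReal (|h| ^ (-(1 + 2 * s))) :=
        lintegral_lintegral_swap h_meas
    _ = _ := lintegral_congr fun h => lintegral_mul_const' _ _ ENNReal.ofReal_ne_top

theorem shiftDiffSq_le (hu : AEMeasurable u) (h : ℝ) :
    shiftDiffSq u h ≤ 4 * ∫⁻ x, ENNReal.ofReal (u x ^ 2) := by
  have h_pt (x : ℝ) : ENNReal.ofReal ((u x - u (x - h)) ^ 2)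
      ≤ 2 * ENNReal.ofReal (u x ^ 2) + 2 * ENNReal.ofReal (u (x - h) ^ 2) := by
    rw [← ENNReal.ofReal_ofNat 2, ← ENNReal.ofReal_mul zero_le_two,
      ← ENNReal.ofReal_mul zero_le_two, ← ENNReal.ofReal_add (by positivity) (by positivity)]
    exact ENNReal.ofReal_le_ofReal (by nlinarith [sq_nonneg (u x + u (x - h))])
  calc shiftDiffSq u h
      ≤ ∫⁻ x, 2 * ENNReal.ofReal (u x ^ 2) + 2 * ENNReal.ofReal (u (x - h) ^ 2) :=
        lintegral_mono h_pt
    _ = (2 * ∫⁻ x, ENNReal.ofReal (u x ^ 2))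
          + 2 * ∫⁻ x, ENNReal.ofReal (u (x - h) ^ 2) := by
        rw [lintegral_add_left' ((hu.pow_const 2).ennreal_ofReal.const_mul 2),
          lintegral_const_mul' _ _ ENNReal.ofNat_ne_top,
          lintegral_const_mul' _ _ ENNReal.ofNat_ne_top]
    _ = 4 * ∫⁻ x, ENNReal.ofReal (u x ^ 2) := by
        rw [lintegral_sub_right_eq_self (fun x => ENNReal.ofReal (u x ^ 2)) h]
        ring

theorem slobSq_le_of_shiftDiffSq_le {s M : ℝ} (hs₀ : 0 < s) (hs₁ : s < 1 / 2)
    (hu : AEMeasurable u) (h_shift : ∀ h, shiftDiffSq u h ≤ ENNReal.ofReal (M ^ 2 * |h|)) :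
    slobSq s u ≤ ENNReal.ofReal (4 / s) * (∫⁻ x, ENNReal.ofReal (u x ^ 2))
      + ENNReal.ofReal (2 / (1 - 2 * s)) * ENNReal.ofReal (M ^ 2) := by
  set A := ∫⁻ x, ENNReal.ofReal (u x ^ 2)
  set F := fun h => shiftDiffSq u h * ENNReal.ofReal (|h| ^ (-(1 + 2 * s)))
  have h_near : ∫⁻ h in {h : ℝ | |h| ≤ 1}, F h
      ≤ ENNReal.ofReal (2 / (1 - 2 * s)) * ENNReal.ofReal (M ^ 2) := by
    have h_pt (h : ℝ) : F h ≤ ENNReal.ofReal (M ^ 2) * ENNReal.ofReal (|h| ^ (-2 * s)) := by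
      calc F h ≤ ENNReal.ofReal (M ^ 2 * |h|) * ENNReal.ofReal (|h| ^ (-(1 + 2 * s))) :=
            mul_le_mul_left (h_shift h) _
        _ = ENNReal.ofReal (M ^ 2) * ENNReal.ofReal (|h| ^ (-2 * s)) := by
            rw [show -2 * s = 1 + -(1 + 2 * s) by ring,
              Real.rpow_one_add' (abs_nonneg h) (by linarith),
              ← ENNReal.ofReal_mul (by positivity), ← ENNReal.ofReal_mul (sq_nonneg M),
              mul_assoc]
    calc ∫⁻ h in {h : ℝ | |h| ≤ 1}, F h
        ≤ ∫⁻ h in {h : ℝ | |h| ≤ 1},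
            ENNReal.ofReal (M ^ 2) * ENNReal.ofReal (|h| ^ (-2 * s)) :=
          lintegral_mono h_pt
      _ = _ := by
          rw [lintegral_const_mul' _ _ ENNReal.ofReal_ne_top,
            setLIntegral_rpow_abs_le_one (by linarith), mul_comm,
            show -2 * s + 1 = 1 - 2 * s by ring]
  have h_far : ∫⁻ h in {h : ℝ | 1 < |h|}, F h ≤ ENNReal.ofReal (4 / s) * A := by
    calc ∫⁻ h in {h : ℝ | 1 < |h|}, F h
        ≤ ∫⁻ h in {h : ℝ | 1 < |h|}, 4 * A * ENNReal.ofReal (|h| ^ (-(1 + 2 * s))) :=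
          lintegral_mono fun h => mul_le_mul_left (shiftDiffSq_le hu h) _
      _ = _ := by
          have h_kernel : -2 / (-(1 + 2 * s) + 1) = 1 / s := by field_simp; ring
          rw [lintegral_const_mul _ (measurable_abs.pow_const _).ennreal_ofReal,
            setLIntegral_rpow_abs_one_lt (by linarith), h_kernel, mul_right_comm,
            ← ENNReal.ofReal_ofNat 4, ← ENNReal.ofReal_mul zero_le_four, mul_one_div]
  have h_compl : {h : ℝ | |h| ≤ 1}ᶜ = {h : ℝ | 1 < |h|} := by
    ext h; simp
  rw [slobSq_eq_lintegral_shiftDiffSq hu,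
    ← lintegral_add_compl F (measurableSet_le measurable_abs measurable_const), h_compl, add_comm]
  exact add_le_add h_far h_near

end

/-- **The injection `H^{1/2}_w(ℝ) ↪ H^{1/2−ε}(ℝ)` has norm of order `ε^{−1/2}`:**
there is `C > 0` such that for every `ε ∈ (0, 1/4]` and every `u ∈ L²(ℝ)` whose weak
`H^{1/2}` seminorm is bounded by `M` (i.e. `‖u − u(· − y)‖²_{L²} ≤ M² |y|` for all `y`),
one has `|u|²_{H^{1/2−ε}} ≤ (C/ε) (‖u‖²_{L²} + M²)`. -/
theorem weakHalf_into_HhalfSubEps :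
    ∃ C > (0 : ℝ), ∀ ε : ℝ, 0 < ε → ε ≤ 1 / 4 →
      ∀ u : ℝ → ℝ, MemLp u 2 volume →
      ∀ M : ℝ, 0 ≤ M →
        (∀ y : ℝ, (∫⁻ x : ℝ, ENNReal.ofReal ((u x - u (x - y)) ^ 2))
            ≤ ENNReal.ofReal (M ^ 2 * |y|)) →
        slobSq (1 / 2 - ε) u
          ≤ ENNReal.ofReal (C / ε) *
              ((∫⁻ x : ℝ, ENNReal.ofReal ((u x) ^ 2)) + ENNReal.ofReal (M ^ 2)) := by
  refine ⟨16, by norm_num, fun ε hε hε₄ u hu M _ h_shift => ?_⟩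
  have h_near : 2 / (1 - 2 * (1 / 2 - ε)) ≤ 16 / ε := by
    rw [show 1 - 2 * (1 / 2 - ε) = 2 * ε by ring, div_mul_cancel_left₀ two_ne_zero,
      inv_eq_one_div]
    gcongr; norm_num
  have h_far : 4 / (1 / 2 - ε) ≤ 16 / ε := by
    rw [div_le_div_iff₀ (by linarith) hε]; nlinarith
  calc slobSq (1 / 2 - ε) u
      ≤ ENNReal.ofReal (4 / (1 / 2 - ε)) * (∫⁻ x, ENNReal.ofReal (u x ^ 2))
        + ENNReal.ofReal (2 / (1 - 2 * (1 / 2 - ε))) * ENNReal.ofReal (M ^ 2) :=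
        slobSq_le_of_shiftDiffSq_le (by linarith) (by linarith)
          hu.aestronglyMeasurable.aemeasurable h_shift
    _ ≤ _ := by
        rw [mul_add]
        gcongr
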